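/- arXiv:0806.2202 — 3 statements merged into one kernel-verified Lean document; each statement's English description precedes it below -/
import Mathlib

section
/- Let r be a prime and k a positive integer with r ≡ 1 (mod k). Let m be a primitive root modulo r, ζ a primitive r-th root of unity in ℂ, and define δ_k(r) = Σ_{j=0}^{(r-1)/k - 1} ζ^{m^{jk}}. Then the field extension ℚ(δ_k(r))/ℚ is Galois with cyclic Galois group of order k. -/
/-!
`δ` is the Gaussian period `∑_{x ∈ P} ζ^x` of the subgroup `P = ⟨m^k⟩` of index `k` in
`(ℤ/r)ˣ ≅ Gal(ℚ(ζ)/ℚ)`. The automorphism `ζ ↦ ζ^a` maps it to the period of the coset `aP`, and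
periods of distinct cosets differ because `ζ, …, ζ^(r-1)` are linearly independent over `ℚ`
(the minimal polynomial `1 + X + ⋯ + X^(r-1)` cannot divide a nonzero polynomial of degree
`< r` without constant term). So the stabilizer of `δ` is `P` and `[ℚ(δ) : ℚ] = [(ℤ/r)ˣ : P] = k`,
while `ℚ(δ) ⊆ ℚ(ζ)` makes `ℚ(δ)/ℚ` Galois with a cyclic group, a quotient of `Gal(ℚ(ζ)/ℚ)`.
-/

open Complex IntermediateField Polynomial
open scoped Pointwise

section GaloisTheory

variable {K L M : Type*} [Field K] [Field L] [Field M] [Algebra K L] [Algebra K M]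

theorem isGalois_isCyclic_of_algHom [IsGalois K M] [IsCyclic Gal(M/K)] (f : L →ₐ[K] M) :
    IsGalois K L ∧ IsCyclic Gal(L/K) := by
  have := IsAbelianGalois.of_isCyclic K M
  have := (IsAbelianGalois.of_algHom f).toIsGalois
  let := f.toRingHom.toAlgebra
  have := IsScalarTower.of_algebraMap_eq' f.comp_algebraMap.symm
  exact ⟨inferInstance, isCyclic_of_surjective _ (AlgEquiv.restrictNormalHom_surjective M)⟩

theorem finrank_adjoin_simple_eq_index_stabilizer [IsGalois K L] (x : L) :
    Module.finrank K K⟮x⟯ = (MulAction.stabilizer Gal(L/K) x).index := by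
  rw [finrank_eq_fixingSubgroup_index]
  congr 1
  ext σ
  simpa using forall_mem_adjoin_smul_eq_self_iff K (S := {x}) σ

theorem finrank_adjoin_simple_coe (E : IntermediateField K L) (x : E) :
    Module.finrank K K⟮x⟯ = Module.finrank K K⟮(x : L)⟯ := by
  refine ((equivMap K⟮x⟯ E.val).trans (equivOfEq ?_)).toLinearEquiv.finrank_eq
  rw [adjoin_map, Set.image_singleton, coe_val]

end GaloisTheory

section Subgroup

variable {G : Type*} [Group G]

theorem Subgroup.index_zpowers_pow [Finite G] {g : G} (hg : orderOf g = Nat.card G) {k : ℕ}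
    (hk : k ≠ 0) (hdvd : k ∣ orderOf g) : (zpowers (g ^ k)).index = k := by
  have h := (zpowers (g ^ k)).index_mul_card
  rw [Nat.card_zpowers, orderOf_pow_of_dvd hk hdvd, ← hg] at h
  have hpos : 0 < orderOf g / k :=
    Nat.div_pos (Nat.le_of_dvd (orderOf_pos g) hdvd) (Nat.pos_of_ne_zero hk)
  exact Nat.eq_of_mul_eq_mul_right hpos (h.trans (Nat.mul_div_cancel' hdvd).symm)

theorem Subgroup.smul_toFinset_eq_self_iff [Fintype G] [DecidableEq G] (P : Subgroup G)
    [Fintype P] {a : G} : a • (P : Set G).toFinset = (P : Set G).toFinset ↔ a ∈ P := by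
  constructor
  · intro h
    have : a • (1 : G) ∈ a • (P : Set G).toFinset := Finset.smul_mem_smul_finset (by simp)
    simpa [h] using this
  · intro ha
    ext y
    rw [← Finset.inv_smul_mem_iff]
    simp [P.mul_mem_cancel_left (inv_mem ha)]

end Subgroup

section PrimitiveRoot

variable {M : Type*} [CommMonoid M] {n : ℕ} {μ : M}

theorem IsPrimitiveRoot.pow_val_natCast (hμ : IsPrimitiveRoot μ n) (N : ℕ) :
    μ ^ (N : ZMod n).val = μ ^ N := by
  rw [ZMod.val_natCast, hμ.eq_orderOf, pow_mod_orderOf]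

theorem IsPrimitiveRoot.pow_val_pow_val [NeZero n] (hμ : IsPrimitiveRoot μ n) (a x : ZMod n) :
    (μ ^ a.val) ^ x.val = μ ^ (a * x).val := by
  rw [← pow_mul, ← hμ.pow_val_natCast (a.val * x.val), Nat.cast_mul, ZMod.natCast_zmod_val,
    ZMod.natCast_zmod_val]

end PrimitiveRoot

section Cyclotomic

variable {K L : Type*} [Field K] [Field L] [Algebra K L]

theorem IsPrimitiveRoot.intermediateField_adjoin_simple_isCyclotomicExtension
    {n : ℕ} [NeZero n] {ζ : L} (hζ : IsPrimitiveRoot ζ n) :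
    IsCyclotomicExtension {n} K K⟮ζ⟯ := by
  change IsCyclotomicExtension {n} K K⟮ζ⟯.toSubalgebra
  rw [adjoin_simple_toSubalgebra_of_isAlgebraic
    (hζ.isIntegral (NeZero.pos n)).tower_top.isAlgebraic]
  exact hζ.adjoin_isCyclotomicExtension K

theorem IsCyclotomicExtension.isCyclic_of_prime {p : ℕ} [Fact p.Prime]
    [IsCyclotomicExtension {p} K L] (h : Irreducible (cyclotomic p K)) : IsCyclic Gal(L/K) :=
  isCyclic_of_surjective _ (autEquivPow L h).symm.surjective

theorem IsPrimitiveRoot.autToPow_bijective {n : ℕ} [NeZero n] [IsCyclotomicExtension {n} K L]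
    (h : Irreducible (cyclotomic n K)) {μ : L} (hμ : IsPrimitiveRoot μ n) :
    Function.Bijective (hμ.autToPow K) := by
  have := IsCyclotomicExtension.finiteDimensional {n} K L
  have := IsCyclotomicExtension.isGalois {n} K L
  refine (Nat.bijective_iff_injective_and_card _).mpr ⟨hμ.autToPow_injective K, ?_⟩
  rw [IsGalois.card_aut_eq_finrank, IsCyclotomicExtension.finrank L h, Nat.card_eq_fintype_card,
    ZMod.card_units_eq_totient]

theorem IsPrimitiveRoot.eq_zero_of_aeval_eq_zero [CharZero L] {p : ℕ} [hp : Fact p.Prime]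
    {μ : L} (hμ : IsPrimitiveRoot μ p) {f : ℚ[X]} (hdeg : f.natDegree < p)
    (hcoeff : f.coeff 0 = 0) (hf : aeval μ f = 0) : f = 0 := by
  have hdvd : cyclotomic p ℚ ∣ f := by
    rw [cyclotomic_eq_minpoly_rat hμ hp.out.pos]
    exact minpoly.dvd ℚ μ hf
  have hdeg' : f.natDegree ≤ (cyclotomic p ℚ).natDegree := by
    rw [natDegree_cyclotomic, Nat.totient_prime hp.out]
    omega
  rw [eq_mul_leadingCoeff_of_monic_of_dvd_of_natDegree_le (cyclotomic.monic p ℚ) hdvd hdeg']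
    at hcoeff ⊢
  rw [coeff_mul_C, cyclotomic_coeff_zero ℚ hp.out.one_lt, one_mul] at hcoeff
  rw [hcoeff, C_0, mul_zero]

end Cyclotomic

def gaussianPeriod {R : Type*} [CommSemiring R] (μ : R) {n : ℕ} (S : Finset (ZMod n)ˣ) : R :=
  ∑ x ∈ S, μ ^ (x : ZMod n).val

section GaussianPeriod

theorem map_gaussianPeriod {R S : Type*} [CommSemiring R] [CommSemiring S] (f : R →+* S)
    (μ : R) {n : ℕ} (T : Finset (ZMod n)ˣ) :
    f (gaussianPeriod μ T) = gaussianPeriod (f μ) T := by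
  simp only [gaussianPeriod, map_sum, map_pow]

theorem gaussianPeriod_mem_adjoin_simple {K L : Type*} [Field K] [Field L] [Algebra K L] (ζ : L)
    {n : ℕ} (S : Finset (ZMod n)ˣ) : gaussianPeriod ζ S ∈ K⟮ζ⟯ :=
  sum_mem fun _ _ => pow_mem (IntermediateField.mem_adjoin_simple_self K ζ) _

theorem gaussianPeriod_zpowers {R : Type*} [CommSemiring R] (μ : R) {n : ℕ}
    (g : (ZMod n)ˣ) [Fintype (Subgroup.zpowers g)] :
    gaussianPeriod μ (Subgroup.zpowers g : Set (ZMod n)ˣ).toFinset =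
      ∑ j ∈ Finset.range (orderOf g), μ ^ ((g ^ j : (ZMod n)ˣ) : ZMod n).val := by
  have : (Subgroup.zpowers g : Set (ZMod n)ˣ).toFinset =
      (Finset.range (orderOf g)).image (g ^ ·) := by
    ext x
    rw [Set.mem_toFinset, SetLike.mem_coe, mem_zpowers_iff_mem_range_orderOf]
  rw [gaussianPeriod, this, Finset.sum_image fun i hi j hj =>
    pow_injOn_Iio_orderOf (by simpa using hi) (by simpa using hj)]

theorem IsPrimitiveRoot.algEquiv_apply_gaussianPeriod {R S : Type*} [CommRing R] [CommRing S]
    [IsDomain S] [Algebra R S] {n : ℕ} [NeZero n] {μ : S} (hμ : IsPrimitiveRoot μ n)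
    (σ : S ≃ₐ[R] S) (T : Finset (ZMod n)ˣ) :
    σ (gaussianPeriod μ T) = gaussianPeriod μ (hμ.autToPow R σ • T) := by
  rw [gaussianPeriod, gaussianPeriod, map_sum, Finset.smul_finset_def,
    Finset.sum_image (MulAction.injective _).injOn]
  refine Finset.sum_congr rfl fun x _ => ?_
  rw [map_pow, ← hμ.autToPow_spec R σ, hμ.pow_val_pow_val]
  rfl

variable {K L : Type*} [Field K] [Field L] [Algebra K L] {p : ℕ} [Fact p.Prime] {ζ : L}

theorem IsPrimitiveRoot.gaussianPeriod_injective [CharZero L] (hζ : IsPrimitiveRoot ζ p) :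
    Function.Injective (gaussianPeriod ζ : Finset (ZMod p)ˣ → L) := by
  intro S T h
  set f : Finset (ZMod p)ˣ → ℚ[X] := fun S => ∑ x ∈ S, X ^ (x : ZMod p).val
  have hcoeff (S : Finset (ZMod p)ˣ) (x : (ZMod p)ˣ) :
      (f S).coeff (x : ZMod p).val = if x ∈ S then 1 else 0 := by
    simp [f, coeff_X_pow, (ZMod.val_injective p).eq_iff, Units.val_inj]
  have hcoeff_zero (S : Finset (ZMod p)ˣ) : (f S).coeff 0 = 0 := by
    simp [f, coeff_X_pow, eq_comm (a := 0), ZMod.val_eq_zero]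
  have hdeg (S : Finset (ZMod p)ˣ) : (f S).natDegree < p := by
    refine (natDegree_sum_le_of_forall_le _ _ (n := p - 1) fun x _ => ?_).trans_lt
      (Nat.sub_lt (NeZero.pos p) one_pos)
    rw [natDegree_X_pow]
    exact Nat.le_sub_one_of_lt (ZMod.val_lt _)
  have hzero : f S - f T = 0 := by
    refine hζ.eq_zero_of_aeval_eq_zero ?_ ?_ ?_
    · exact (natDegree_sub_le _ _).trans_lt (max_lt (hdeg S) (hdeg T))
    · simp [hcoeff_zero]
    · simpa [f, gaussianPeriod, sub_eq_zero] using h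
  ext x
  have := congrArg (coeff · (x : ZMod p).val) hzero
  simp only [coeff_sub, hcoeff, coeff_zero] at this
  split_ifs at this <;> simp_all

theorem IsPrimitiveRoot.stabilizer_gaussianPeriod [CharZero L] (hζ : IsPrimitiveRoot ζ p)
    (P : Subgroup (ZMod p)ˣ) [Fintype P] :
    MulAction.stabilizer Gal(L/K) (gaussianPeriod ζ (P : Set (ZMod p)ˣ).toFinset) =
      P.comap (hζ.autToPow K) := by
  ext σ
  rw [MulAction.mem_stabilizer_iff, Subgroup.mem_comap, AlgEquiv.smul_def,
    hζ.algEquiv_apply_gaussianPeriod, hζ.gaussianPeriod_injective.eq_iff,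
    P.smul_toFinset_eq_self_iff]

theorem IsPrimitiveRoot.finrank_adjoin_gaussianPeriod [CharZero L]
    (h : Irreducible (cyclotomic p K)) (hζ : IsPrimitiveRoot ζ p) (P : Subgroup (ZMod p)ˣ)
    [Fintype P] :
    Module.finrank K K⟮gaussianPeriod ζ (P : Set (ZMod p)ˣ).toFinset⟯ = P.index := by
  have := hζ.intermediateField_adjoin_simple_isCyclotomicExtension (K := K)
  have := IsCyclotomicExtension.isGalois {p} K K⟮ζ⟯
  have hμ : IsPrimitiveRoot (AdjoinSimple.gen K ζ) p := by
    rwa [← IsPrimitiveRoot.coe_submonoidClass_iff, AdjoinSimple.coe_gen]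
  have hcoe : gaussianPeriod ζ (P : Set (ZMod p)ˣ).toFinset =
      algebraMap K⟮ζ⟯ L (gaussianPeriod (AdjoinSimple.gen K ζ) (P : Set (ZMod p)ˣ).toFinset) := by
    rw [map_gaussianPeriod, AdjoinSimple.algebraMap_gen]
  rw [hcoe]
  refine (finrank_adjoin_simple_coe _ _).symm.trans ?_
  rw [finrank_adjoin_simple_eq_index_stabilizer, hμ.stabilizer_gaussianPeriod,
    P.index_comap_of_surjective (hμ.autToPow_bijective h).2]

-- The cardinality is part of the conclusion because over `ℚ` instance search equips `ℚ⟮δ⟯` with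
-- `DivisionRing.toRatAlgebra` instead of its intermediate-field algebra, which blocks
-- `IsGalois.card_aut_eq_finrank` there; the two structures agree only up to unfolding.
theorem IsPrimitiveRoot.isGalois_isCyclic_card_of_le_adjoin (h : Irreducible (cyclotomic p K))
    (hζ : IsPrimitiveRoot ζ p) {F : IntermediateField K L} (hF : F ≤ K⟮ζ⟯) :
    IsGalois K F ∧ IsCyclic Gal(F/K) ∧ Nat.card Gal(F/K) = Module.finrank K F := by
  have := hζ.intermediateField_adjoin_simple_isCyclotomicExtension (K := K)
  have := IsCyclotomicExtension.isGalois {p} K K⟮ζ⟯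
  have := IsCyclotomicExtension.isCyclic_of_prime (L := K⟮ζ⟯) h
  have := IsCyclotomicExtension.finiteDimensional {p} K K⟮ζ⟯
  have := FiniteDimensional.of_injective (inclusion hF).toLinearMap (inclusion hF).injective
  obtain ⟨hgal, hcyc⟩ := isGalois_isCyclic_of_algHom (inclusion hF)
  exact ⟨hgal, hcyc, IsGalois.card_aut_eq_finrank K F⟩

end GaussianPeriod

/-- Let `r` be a prime, `k ∣ r - 1` with `k > 0`, `m` a primitive root modulo `r`,
`ζ = exp(2πi/r)` and `δ = ∑_{j=0}^{(r-1)/k - 1} ζ^{m^{jk}}` the Gaussian period.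
Then `ℚ(δ)/ℚ` is a Galois extension with cyclic Galois group of order `k`. -/
theorem stmt_2 (r k : ℕ) (hr : r.Prime) (hk : 0 < k) (hdvd : k ∣ r - 1)
    (m : ℕ) (hm : orderOf (m : ZMod r) = r - 1)
    (ζ : ℂ) (hζ : ζ = Complex.exp (2 * Real.pi * Complex.I / r))
    (δ : ℂ) (hδ : δ = ∑ j ∈ Finset.range ((r - 1) / k), ζ ^ (m ^ (j * k))) :
    IsGalois ℚ ℚ⟮δ⟯ ∧ IsCyclic (ℚ⟮δ⟯ ≃ₐ[ℚ] ℚ⟮δ⟯) ∧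
      Nat.card (ℚ⟮δ⟯ ≃ₐ[ℚ] ℚ⟮δ⟯) = k := by
  classical
  have := Fact.mk hr
  have hζ : IsPrimitiveRoot ζ r := hζ ▸ Complex.isPrimitiveRoot_exp r hr.ne_zero
  have hirr : Irreducible (cyclotomic r ℚ) := cyclotomic.irreducible_rat hr.pos
  have hmu : IsUnit (m : ZMod r) := (orderOf_pos_iff.mp (by have := hr.two_le; omega)).isUnit
  have hu : orderOf hmu.unit = r - 1 := by rw [← hm, ← orderOf_units]; rfl
  set P := Subgroup.zpowers (hmu.unit ^ k)
  have hδP : δ = gaussianPeriod ζ (P : Set (ZMod r)ˣ).toFinset := by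
    rw [hδ, gaussianPeriod_zpowers, orderOf_pow_of_dvd hk.ne' (hu ▸ hdvd), hu]
    refine Finset.sum_congr rfl fun j _ => ?_
    rw [← hζ.pow_val_natCast]
    simp [← pow_mul, mul_comm]
  have hindex : P.index = k :=
    Subgroup.index_zpowers_pow (by rw [hu, Nat.card_eq_fintype_card, ZMod.card_units])
      hk.ne' (hu ▸ hdvd)
  obtain ⟨hgal, hcyc, hcard⟩ := hζ.isGalois_isCyclic_card_of_le_adjoin hirr
    (adjoin_simple_le_iff.mpr (hδP ▸ gaussianPeriod_mem_adjoin_simple ζ _))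
  have hrank := hζ.finrank_adjoin_gaussianPeriod hirr P
  rw [← hδP, hindex] at hrank
  exact ⟨hgal, hcyc, hcard.trans hrank⟩
end

section
/- Let p be an odd prime. Every non-abelian group of order p³ is isomorphic to exactly one of: the Heisenberg group ⟨u,v,w : u^p=v^p=w^p=1, wu=uw, wv=vw, vu=uvw⟩ of exponent p, or the semidirect product C_{p²} ⋊ C_p = ⟨u,v : u^{p²}=v^p=1, vu=u^{p+1}v⟩ of exponent p². -/
/-!
A non-abelian group `G` of order `p³` has centre `Z` of order `p` and `G ⧸ Z` of order `p²` and
exponent `p`. So commutators and `p`-th powers are central of order `p`, and for odd `p` the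
identity `(a * b) ^ p = ⁅b, a⁆ ^ (p.choose 2) * a ^ p * b ^ p` makes `x ↦ x ^ p` a homomorphism.

If `G` has exponent `p`, two non-commuting elements `a, b` generate `G` and, with their
commutator, satisfy the Heisenberg relations. Otherwise take `x` with `x ^ p ≠ 1`. The kernel of
`x ↦ x ^ p` has order at least `p²`, so it is not contained in the proper subgroup
`centralizer {x}` and contains some `v` not commuting with `x`. Then `⁅v, x⁆` generates `Z ∋ x ^ p`,
and for a suitable `s` the element `v ^ s` satisfies `⁅v ^ s, x⁆ = x ^ p`, which is the semidirect
relation. In both cases the presentation has a normal form with at most `p³` elements, so the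
surjection from the presented group onto `G` is an isomorphism.

The two cases exclude each other: the Heisenberg group has exponent `p`, whereas exponent `p` in
`C_{p²} ⋊ C_p` forces its generators to commute.
-/
/-- The relations of the Heisenberg group
`⟨u, v, w : u^p = v^p = w^p = 1, wu = uw, wv = vw, vu = uvw⟩`. -/
def heisenbergRels (p : ℕ) : Set (FreeGroup (Fin 3)) :=
  {FreeGroup.of 0 ^ p, FreeGroup.of 1 ^ p, FreeGroup.of 2 ^ p,
    (FreeGroup.of 2 * FreeGroup.of 0) * (FreeGroup.of 0 * FreeGroup.of 2)⁻¹,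
    (FreeGroup.of 2 * FreeGroup.of 1) * (FreeGroup.of 1 * FreeGroup.of 2)⁻¹,
    (FreeGroup.of 1 * FreeGroup.of 0) *
      (FreeGroup.of 0 * FreeGroup.of 1 * FreeGroup.of 2)⁻¹}

/-- The relations of `C_{p²} ⋊ C_p = ⟨u, v : u^{p²} = v^p = 1, vu = u^{p+1}v⟩`
(with `u = of 0`, `v = of 1`). -/
def semidirectRels (p : ℕ) : Set (FreeGroup (Fin 2)) :=
  {FreeGroup.of 0 ^ (p ^ 2), FreeGroup.of 1 ^ p,
    (FreeGroup.of 1 * FreeGroup.of 0) *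
      (FreeGroup.of 0 ^ (p + 1) * FreeGroup.of 1)⁻¹}

open Subgroup
open scoped commutatorElement

section ClassTwo

variable {G : Type*} [Group G]

theorem pow_mul_eq_pow_mul_mul_pow {a b c : G} (hc : c ∈ center G) (hba : b * a = c * a * b)
    (n : ℕ) : b ^ n * a = c ^ n * a * b ^ n := by
  induction n with
  | zero => simp
  | succ n ih =>
    calc b ^ (n + 1) * a = b * c ^ n * a * b ^ n := by rw [pow_succ', mul_assoc, ih]; group
      _ = c ^ n * (b * a) * b ^ n := by rw [mem_center_iff.mp (pow_mem hc n) b]; group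
      _ = c ^ (n + 1) * a * b ^ (n + 1) := by rw [hba]; group

theorem mul_pow_eq_pow_choose_mul_pow_mul_pow {a b c : G} (hc : c ∈ center G)
    (hba : b * a = c * a * b) (n : ℕ) : (a * b) ^ n = c ^ n.choose 2 * a ^ n * b ^ n := by
  induction n with
  | zero => simp
  | succ n ih =>
    calc (a * b) ^ (n + 1) = c ^ n.choose 2 * a ^ n * (b ^ n * a) * b := by
          rw [pow_succ, ih]; group
      _ = c ^ n.choose 2 * (a ^ n * c ^ n) * a * b ^ (n + 1) := by
          rw [pow_mul_eq_pow_mul_mul_pow hc hba]; group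
      _ = c ^ (n + 1).choose 2 * a ^ (n + 1) * b ^ (n + 1) := by
          rw [mem_center_iff.mp (pow_mem hc n), Nat.choose_succ_succ', Nat.choose_one_right]
          group

def commutatorElementLeftHom (x : G) (h : ∀ a : G, ⁅a, x⁆ ∈ center G) : G →* G :=
  MonoidHom.mk' (fun a => ⁅a, x⁆) fun a b => by
    rw [commutatorElement_mul_left_eq_conj_mul, mem_center_iff.mp (h b), mul_inv_cancel_right,
      mem_center_iff.mp (h a)]

theorem isMulCommutative_of_closure_eq_top {s : Set G} (hs : closure s = ⊤)
    (hcomm : ∀ x ∈ s, ∀ y ∈ s, x * y = y * x) : IsMulCommutative G := by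
  have := isMulCommutative_closure hcomm
  rw [hs] at this
  exact topEquiv.surjective.mul_comm (f := (topEquiv : (⊤ : Subgroup G) ≃* G)) this

end ClassTwo

section NormalForms

variable {G : Type*} [Group G]

theorem exists_eq_pow_mul_pow_mul_pow {u v w : G} (hgen : closure {u, v, w} = ⊤)
    (hu : IsOfFinOrder u) (hv : IsOfFinOrder v) (hw : IsOfFinOrder w)
    (hwu : Commute w u) (hwv : Commute w v) (hvu : v * u = u * v * w) (g : G) :
    ∃ a b c : ℕ, g = u ^ a * v ^ b * w ^ c := by
  have hconj : ∀ b : ℕ, v ^ b * u = u * v ^ b * w ^ b := by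
    intro b
    induction b with
    | zero => simp
    | succ b ih =>
      calc v ^ (b + 1) * u = v ^ b * (u * v * w) := by rw [pow_succ, mul_assoc, hvu]
        _ = u * v ^ b * (w ^ b * v) * w := by rw [← mul_assoc, ← mul_assoc, ih]; group
        _ = u * v ^ (b + 1) * w ^ (b + 1) := by rw [(hwv.pow_left b).eq]; group
  have hmon : Submonoid.closure {u, v, w} = ⊤ := by
    rw [← closure_toSubmonoid_of_isOfFinOrder (by simp [hu, hv, hw]), hgen, top_toSubmonoid]
  refine Submonoid.induction_of_closure_eq_top_right hmon g ⟨0, 0, 0, by simp⟩ ?_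
  rintro _ y hy ⟨a, b, c, rfl⟩
  rcases hy with h | h | h <;> rw [h]
  · refine ⟨a + 1, b, b + c, ?_⟩
    rw [mul_assoc _ (w ^ c), (hwu.pow_left c).eq, ← mul_assoc, mul_assoc _ (v ^ b), hconj]
    group
  · exact ⟨a, b + 1, c, by rw [mul_assoc _ (w ^ c), (hwv.pow_left c).eq]; group⟩
  · exact ⟨a, b, c + 1, by group⟩

theorem exists_eq_pow_mul_pow {u v : G} {k : ℕ} (hgen : closure {u, v} = ⊤)
    (hu : IsOfFinOrder u) (hv : IsOfFinOrder v) (hvu : v * u = u ^ k * v) (g : G) :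
    ∃ a b : ℕ, g = u ^ a * v ^ b := by
  have hconj : ∀ b : ℕ, v ^ b * u = u ^ k ^ b * v ^ b := by
    intro b
    induction b with
    | zero => simp
    | succ b ih =>
      have hvuk : ∀ m : ℕ, v * u ^ m = u ^ (k * m) * v := fun m => by
        rw [pow_mul]; exact (SemiconjBy.pow_right hvu m).eq
      rw [pow_succ', mul_assoc, ih, ← mul_assoc, hvuk, pow_succ', mul_assoc]
  have hmon : Submonoid.closure {u, v} = ⊤ := by
    rw [← closure_toSubmonoid_of_isOfFinOrder (by simp [hu, hv]), hgen, top_toSubmonoid]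
  refine Submonoid.induction_of_closure_eq_top_right hmon g ⟨0, 0, by simp⟩ ?_
  rintro _ y hy ⟨a, b, rfl⟩
  rcases hy with h | h <;> rw [h]
  · exact ⟨a + k ^ b, b, by rw [mul_assoc, hconj]; group⟩
  · exact ⟨a, b + 1, by group⟩

end NormalForms

namespace PresentedGroup

variable {α G : Type*} [Group G] {rels : Set (FreeGroup α)}

theorem lift_of_eq_one_of_mem {r : FreeGroup α} (hr : r ∈ rels) :
    FreeGroup.lift (of : α → PresentedGroup rels) r = 1 := by
  rw [FreeGroup.ext_hom (FreeGroup.lift of) (mk rels) fun _ => FreeGroup.lift_apply_of]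
  exact one_of_mem hr

theorem toGroup_surjective {f : α → G} (h : ∀ r ∈ rels, FreeGroup.lift f r = 1)
    (hf : closure (Set.range f) = ⊤) : Function.Surjective (toGroup h) := by
  rw [← MonoidHom.range_eq_top, eq_top_iff, ← hf, closure_le]
  rintro _ ⟨i, rfl⟩
  exact ⟨of i, toGroup.of h⟩

theorem nonempty_mulEquiv_of_card_le [Finite (PresentedGroup rels)] {f : α → G}
    (h : ∀ r ∈ rels, FreeGroup.lift f r = 1) (hf : closure (Set.range f) = ⊤)
    (hcard : Nat.card (PresentedGroup rels) ≤ Nat.card G) :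
    Nonempty (G ≃* PresentedGroup rels) :=
  ⟨(MulEquiv.ofBijective _ ((toGroup_surjective h hf).bijective_of_nat_card_le hcard)).symm⟩

end PresentedGroup

section Relations

variable {G : Type*} [Group G] {p : ℕ}

theorem forall_heisenbergRels_iff {f : Fin 3 → G} :
    (∀ r ∈ heisenbergRels p, FreeGroup.lift f r = 1) ↔
      f 0 ^ p = 1 ∧ f 1 ^ p = 1 ∧ f 2 ^ p = 1 ∧ Commute (f 2) (f 0) ∧ Commute (f 2) (f 1) ∧
        f 1 * f 0 = f 0 * f 1 * f 2 := by
  simp only [heisenbergRels, Set.mem_insert_iff, Set.mem_singleton_iff, forall_eq_or_imp,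
    forall_eq, map_pow, map_mul, map_inv, FreeGroup.lift_apply_of, mul_inv_eq_one]
  rfl

theorem forall_semidirectRels_iff {f : Fin 2 → G} :
    (∀ r ∈ semidirectRels p, FreeGroup.lift f r = 1) ↔
      f 0 ^ p ^ 2 = 1 ∧ f 1 ^ p = 1 ∧ f 1 * f 0 = f 0 ^ (p + 1) * f 1 := by
  simp only [semidirectRels, Set.mem_insert_iff, Set.mem_singleton_iff, forall_eq_or_imp,
    forall_eq, map_pow, map_mul, map_inv, FreeGroup.lift_apply_of, mul_inv_eq_one]

variable (p) [NeZero p]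

theorem surjective_heisenbergRels_pow_mul_pow_mul_pow :
    Function.Surjective fun t : Fin p × Fin p × Fin p =>
      (PresentedGroup.of 0 : PresentedGroup (heisenbergRels p)) ^ (t.1 : ℕ) *
        PresentedGroup.of 1 ^ (t.2.1 : ℕ) * PresentedGroup.of 2 ^ (t.2.2 : ℕ) := by
  obtain ⟨hu, hv, hw, hwu, hwv, hvu⟩ :=
    forall_heisenbergRels_iff.mp fun _ => PresentedGroup.lift_of_eq_one_of_mem
  have hgen : closure {(PresentedGroup.of 0 : PresentedGroup (heisenbergRels p)),
      PresentedGroup.of 1, PresentedGroup.of 2} = ⊤ := by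
    rw [← PresentedGroup.closure_range_of]; congr 1; ext; simp [Fin.exists_fin_succ, eq_comm]
  have hfin : ∀ {x : PresentedGroup (heisenbergRels p)}, x ^ p = 1 → IsOfFinOrder x :=
    fun hx => isOfFinOrder_iff_pow_eq_one.mpr ⟨p, NeZero.pos p, hx⟩
  intro g
  obtain ⟨a, b, c, rfl⟩ :=
    exists_eq_pow_mul_pow_mul_pow hgen (hfin hu) (hfin hv) (hfin hw) hwu hwv hvu g
  have hpos := NeZero.pos p
  refine ⟨(⟨a % p, Nat.mod_lt a hpos⟩, ⟨b % p, Nat.mod_lt b hpos⟩, ⟨c % p, Nat.mod_lt c hpos⟩), ?_⟩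
  dsimp only
  rw [← pow_eq_pow_mod a hu, ← pow_eq_pow_mod b hv, ← pow_eq_pow_mod c hw]

theorem surjective_semidirectRels_pow_mul_pow :
    Function.Surjective fun t : Fin (p ^ 2) × Fin p =>
      (PresentedGroup.of 0 : PresentedGroup (semidirectRels p)) ^ (t.1 : ℕ) *
        PresentedGroup.of 1 ^ (t.2 : ℕ) := by
  obtain ⟨hu, hv, hvu⟩ :=
    forall_semidirectRels_iff.mp fun _ => PresentedGroup.lift_of_eq_one_of_mem
  have hgen : closure {(PresentedGroup.of 0 : PresentedGroup (semidirectRels p)),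
      PresentedGroup.of 1} = ⊤ := by
    rw [← PresentedGroup.closure_range_of]; congr 1; ext; simp [Fin.exists_fin_succ, eq_comm]
  intro g
  obtain ⟨a, b, rfl⟩ := exists_eq_pow_mul_pow hgen
    (isOfFinOrder_iff_pow_eq_one.mpr ⟨p ^ 2, pow_pos (NeZero.pos p) 2, hu⟩)
    (isOfFinOrder_iff_pow_eq_one.mpr ⟨p, NeZero.pos p, hv⟩) hvu g
  refine ⟨(⟨a % p ^ 2, Nat.mod_lt a (pow_pos (NeZero.pos p) 2)⟩,
    ⟨b % p, Nat.mod_lt b (NeZero.pos p)⟩), ?_⟩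
  dsimp only
  rw [← pow_eq_pow_mod a hu, ← pow_eq_pow_mod b hv]

instance : Finite (PresentedGroup (heisenbergRels p)) :=
  .of_surjective _ (surjective_heisenbergRels_pow_mul_pow_mul_pow p)

instance : Finite (PresentedGroup (semidirectRels p)) :=
  .of_surjective _ (surjective_semidirectRels_pow_mul_pow p)

theorem card_presentedGroup_heisenbergRels_le :
    Nat.card (PresentedGroup (heisenbergRels p)) ≤ p ^ 3 := by
  calc _ ≤ Nat.card (Fin p × Fin p × Fin p) :=
        Nat.card_le_card_of_surjective _ (surjective_heisenbergRels_pow_mul_pow_mul_pow p)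
    _ = p ^ 3 := by simp only [Nat.card_prod, Nat.card_fin]; ring

theorem card_presentedGroup_semidirectRels_le :
    Nat.card (PresentedGroup (semidirectRels p)) ≤ p ^ 3 := by
  calc _ ≤ Nat.card (Fin (p ^ 2) × Fin p) :=
        Nat.card_le_card_of_surjective _ (surjective_semidirectRels_pow_mul_pow p)
    _ = p ^ 3 := by simp only [Nat.card_prod, Nat.card_fin]; ring

end Relations

section PrimeCube

variable {p : ℕ} [hp : Fact p.Prime] {G : Type*} [Group G]

theorem isMulCommutative_of_card_dvd_prime_sq (h : Nat.card G ∣ p ^ 2) : IsMulCommutative G := by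
  obtain ⟨k, hk, hcard⟩ := (Nat.dvd_prime_pow hp.out).1 h
  obtain hk | rfl : k ≤ 1 ∨ k = 2 := by omega
  · have : IsCyclic G := isCyclic_of_card_dvd_prime (p := p)
      (hcard ▸ (pow_dvd_pow p hk).trans (pow_one p).dvd)
    infer_instance
  · exact IsPGroup.isMulCommutative_of_card_eq_prime_sq hcard

variable (hG : Nat.card G = p ^ 3)
include hG

theorem card_subgroup_dvd_prime_sq_of_ne_top {H : Subgroup G} (hH : H ≠ ⊤) :
    Nat.card H ∣ p ^ 2 := by
  have : Finite G := Nat.finite_of_card_ne_zero (hG ▸ pow_ne_zero 3 hp.out.ne_zero)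
  obtain ⟨k, hk, hcard⟩ := (Nat.dvd_prime_pow hp.out).1 (hG ▸ H.card_subgroup_dvd_card)
  have hk3 : k ≠ 3 := by
    rintro rfl
    exact hH (card_eq_iff_eq_top H |>.mp (hcard.trans hG.symm))
  exact hcard ▸ pow_dvd_pow p (by omega)

theorem closure_pair_eq_top_of_not_commute {a b : G} (hab : ¬ Commute a b) :
    closure {a, b} = ⊤ := by
  by_contra hne
  have := isMulCommutative_of_card_dvd_prime_sq (card_subgroup_dvd_prime_sq_of_ne_top hG hne)
  exact hab (congrArg Subtype.val (isMulCommutative_iff.mp this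
    ⟨a, subset_closure (by simp)⟩ ⟨b, subset_closure (by simp)⟩))

variable (hnab : ¬ IsMulCommutative G)
include hnab

theorem card_center_eq_prime : Nat.card (center G) = p := by
  obtain ⟨k, hk0, hk⟩ := IsPGroup.card_center_eq_prime_pow hG (by norm_num)
  have hmul : p ^ k * (center G).index = p ^ 2 * p := by
    rw [← hk, (center G).card_mul_index, hG]; ring
  obtain rfl | hk2 : k = 1 ∨ 2 ≤ k := by omega
  · exact hk.trans (pow_one p)
  · have hdvd : (center G).index ∣ p := by
      rw [← Nat.mul_dvd_mul_iff_left (pow_pos hp.out.pos 2), ← hmul]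
      exact mul_dvd_mul_right (pow_dvd_pow p hk2) _
    have : IsCyclic (G ⧸ center G) := isCyclic_of_card_dvd_prime (index_eq_card (center G) ▸ hdvd)
    exact absurd (isMulCommutative_of_isCyclic_quotient_center_self G) hnab

theorem card_quotient_center_eq_prime_sq : Nat.card (G ⧸ center G) = p ^ 2 := by
  have := card_mul_index (center G)
  rw [card_center_eq_prime hG hnab, hG] at this
  rw [← index_eq_card]
  apply Nat.eq_of_mul_eq_mul_left hp.out.pos
  rw [this]; ring

theorem commutatorElement_mem_center (a b : G) : ⁅a, b⁆ ∈ center G := by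
  have := IsPGroup.isMulCommutative_of_card_eq_prime_sq (card_quotient_center_eq_prime_sq hG hnab)
  rw [← QuotientGroup.ker_mk' (center G), MonoidHom.mem_ker, map_commutatorElement,
    commutatorElement_eq_one_iff_mul_comm]
  exact isMulCommutative_iff.mp this _ _

theorem pow_mem_center (x : G) : x ^ p ∈ center G := by
  rw [← QuotientGroup.ker_mk' (center G), MonoidHom.mem_ker, map_pow, ← orderOf_dvd_iff_pow_eq_one]
  have : Finite G := Nat.finite_of_card_ne_zero (hG ▸ pow_ne_zero 3 hp.out.ne_zero)
  have hcard := card_quotient_center_eq_prime_sq hG hnab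
  obtain ⟨k, hk, hord⟩ := (Nat.dvd_prime_pow hp.out).1 (hcard ▸ orderOf_dvd_natCard
    (QuotientGroup.mk' (center G) x))
  have hk2 : k ≠ 2 := by
    rintro rfl
    have := isCyclic_of_orderOf_eq_card _ (hord.trans hcard.symm)
    exact hnab (isMulCommutative_of_isCyclic_quotient_center_self G)
  exact hord ▸ (pow_dvd_pow p (by omega)).trans (pow_one p).dvd

theorem pow_eq_one_of_mem_center {z : G} (hz : z ∈ center G) : z ^ p = 1 :=
  orderOf_dvd_iff_pow_eq_one.mp (card_center_eq_prime hG hnab ▸ (center G).orderOf_dvd_natCard hz)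

theorem pow_prime_sq_eq_one (x : G) : x ^ p ^ 2 = 1 := by
  rw [sq, pow_mul]
  exact pow_eq_one_of_mem_center hG hnab (pow_mem_center hG hnab x)

theorem mul_pow_prime (hodd : Odd p) (a b : G) : (a * b) ^ p = a ^ p * b ^ p := by
  have hc := commutatorElement_mem_center hG hnab b a
  have hp2 : 2 < p := by obtain ⟨m, rfl⟩ := hodd; have := hp.out.two_le; omega
  obtain ⟨k, hk⟩ := hp.out.dvd_choose_self two_ne_zero hp2
  rw [mul_pow_eq_pow_choose_mul_pow_mul_pow hc (by rw [commutatorElement_def]; group), hk,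
    pow_mul, pow_eq_one_of_mem_center hG hnab hc, one_pow, one_mul]

def powPrimeHom (hodd : Odd p) : G →* G :=
  MonoidHom.mk' (· ^ p) (mul_pow_prime hG hnab hodd)

theorem exists_pow_eq_one_not_commute (hodd : Odd p) {x : G} (hx : x ^ p ≠ 1) :
    ∃ v : G, v ^ p = 1 ∧ ¬ Commute v x := by
  have : Finite G := Nat.finite_of_card_ne_zero (hG ▸ pow_ne_zero 3 hp.out.ne_zero)
  set K := (powPrimeHom hG hnab hodd).ker
  have hK : p ^ 2 ≤ Nat.card K := by
    have hidx : K.index ≤ p := by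
      rw [index_ker]
      refine (card_le_of_le ?_).trans_eq (card_center_eq_prime hG hnab)
      rintro _ ⟨y, rfl⟩
      exact pow_mem_center hG hnab y
    have := K.card_mul_index
    rw [hG] at this
    refine Nat.le_of_mul_le_mul_right ?_ hp.out.pos
    calc p ^ 2 * p = Nat.card K * K.index := by rw [this]; ring
      _ ≤ Nat.card K * p := Nat.mul_le_mul_left _ hidx
  by_contra! h
  have hKle : K ≤ centralizer {x} := fun v hv => mem_centralizer_singleton_iff.mpr (h v hv).eq
  have hC : centralizer {x} ≠ ⊤ := fun htop => hx <| pow_eq_one_of_mem_center hG hnab <|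
    centralizer_eq_top_iff_subset.mp htop rfl
  have hKC : K = centralizer {x} := eq_of_le_of_card_ge hKle <|
    (Nat.le_of_dvd (pow_pos hp.out.pos 2) (card_subgroup_dvd_prime_sq_of_ne_top hG hC)).trans hK
  exact hx (hKC ▸ mem_centralizer_singleton_iff.mpr rfl : x ∈ K)

theorem exists_semidirect_generators (hodd : Odd p) {x : G} (hx : x ^ p ≠ 1) :
    ∃ v : G, v ^ p = 1 ∧ v * x = x ^ (p + 1) * v ∧ closure {x, v} = ⊤ := by
  have : Finite G := Nat.finite_of_card_ne_zero (hG ▸ pow_ne_zero 3 hp.out.ne_zero)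
  obtain ⟨v, hv, hvx⟩ := exists_pow_eq_one_not_commute hG hnab hodd hx
  have hc := commutatorElement_mem_center hG hnab v x
  have hc1 : ⁅v, x⁆ ≠ 1 := mt commutatorElement_eq_one_iff_commute.mp hvx
  have hzc : zpowers ⁅v, x⁆ = center G := eq_of_le_of_card_ge (zpowers_le.mpr hc) <| by
    rw [card_center_eq_prime hG hnab, Nat.card_zpowers,
      orderOf_eq_prime (pow_eq_one_of_mem_center hG hnab hc) hc1]
  obtain ⟨s, hs⟩ := mem_zpowers_iff.mp (hzc ▸ pow_mem_center hG hnab x)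
  have hcomm : ⁅v ^ s, x⁆ = x ^ p := by
    rw [← hs]
    exact map_zpow
      (commutatorElementLeftHom x fun a => commutatorElement_mem_center hG hnab a x) v s
  refine ⟨v ^ s, ?_, ?_, ?_⟩
  · rw [← zpow_natCast, ← zpow_mul, mul_comm, zpow_mul, zpow_natCast, hv, one_zpow]
  · rw [pow_succ, ← hcomm, commutatorElement_def]; group
  · refine closure_pair_eq_top_of_not_commute hG fun h => hx ?_
    rw [← hcomm, commutatorElement_eq_one_iff_commute]
    exact h.symm

theorem nonempty_mulEquiv_heisenberg (hexp : ∀ x : G, x ^ p = 1) :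
    Nonempty (G ≃* PresentedGroup (heisenbergRels p)) := by
  obtain ⟨a, b, hab⟩ : ∃ a b : G, ¬ Commute a b := by
    simpa [isMulCommutative_iff, Commute, SemiconjBy] using hnab
  have hc := commutatorElement_mem_center hG hnab b⁻¹ a⁻¹
  have : NeZero p := ⟨hp.out.ne_zero⟩
  refine PresentedGroup.nonempty_mulEquiv_of_card_le (f := ![a, b, ⁅b⁻¹, a⁻¹⁆]) ?_ ?_
    (hG ▸ card_presentedGroup_heisenbergRels_le p)
  · rw [forall_heisenbergRels_iff]
    refine ⟨hexp a, hexp b, hexp _, (mem_center_iff.mp hc a).symm, (mem_center_iff.mp hc b).symm,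
      ?_⟩
    simp only [Matrix.cons_val]
    rw [commutatorElement_def]; group
  · rw [eq_top_iff, ← closure_pair_eq_top_of_not_commute hG hab]
    exact closure_mono (by simp [Set.insert_subset_iff])

theorem nonempty_mulEquiv_semidirect (hodd : Odd p) {x : G} (hx : x ^ p ≠ 1) :
    Nonempty (G ≃* PresentedGroup (semidirectRels p)) := by
  obtain ⟨v, hv, hvx, hgen⟩ := exists_semidirect_generators hG hnab hodd hx
  have : NeZero p := ⟨hp.out.ne_zero⟩
  refine PresentedGroup.nonempty_mulEquiv_of_card_le (f := ![x, v]) ?_ ?_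
    (hG ▸ card_presentedGroup_semidirectRels_le p)
  · exact forall_semidirectRels_iff.mpr ⟨pow_prime_sq_eq_one hG hnab x, hv, hvx⟩
  · rw [← hgen]; congr 1; simp [Set.pair_comm]

theorem pow_eq_one_of_mulEquiv_heisenberg (hodd : Odd p)
    (e : G ≃* PresentedGroup (heisenbergRels p)) (g : G) : g ^ p = 1 := by
  obtain ⟨hu, hv, hw, -⟩ :=
    forall_heisenbergRels_iff (p := p).mp fun _ => PresentedGroup.lift_of_eq_one_of_mem
  have htop : (powPrimeHom hG hnab hodd).ker.comap e.symm.toMonoidHom = ⊤ := by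
    rw [eq_top_iff, ← PresentedGroup.closure_range_of, closure_le]
    rintro _ ⟨i, rfl⟩
    fin_cases i <;> simp [powPrimeHom, ← map_pow, hu, hv, hw]
  have hg := htop ▸ mem_top (e g)
  rw [mem_comap, MonoidHom.mem_ker] at hg
  simpa [powPrimeHom] using hg

end PrimeCube

theorem isMulCommutative_of_mulEquiv_semidirect {p : ℕ} {G : Type*} [Group G]
    (e : G ≃* PresentedGroup (semidirectRels p)) (hexp : ∀ g : G, g ^ p = 1) :
    IsMulCommutative G := by
  obtain ⟨-, -, hvu⟩ :=
    forall_semidirectRels_iff.mp fun _ => PresentedGroup.lift_of_eq_one_of_mem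
  have hu : (PresentedGroup.of 0 : PresentedGroup (semidirectRels p)) ^ p = 1 := by
    rw [← e.apply_symm_apply (PresentedGroup.of 0), ← map_pow, hexp, map_one]
  rw [pow_succ, hu, one_mul] at hvu
  refine Function.Surjective.mul_comm (f := e.symm.toMulHom) e.symm.surjective ?_
  refine isMulCommutative_of_closure_eq_top (PresentedGroup.closure_range_of _) ?_
  rintro _ ⟨i, rfl⟩ _ ⟨j, rfl⟩
  fin_cases i <;> fin_cases j <;> simp [hvu]

/-- For an odd prime `p`, every non-abelian group of order `p³` is isomorphic to
exactly one of the Heisenberg group (exponent `p`) and the semidirect product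
`C_{p²} ⋊ C_p` (exponent `p²`). -/
theorem stmt_13 (p : ℕ) (hp : p.Prime) (hodd : Odd p)
    (G : Type*) [Group G] (hG : Nat.card G = p ^ 3)
    (hnab : ¬ ∀ a b : G, a * b = b * a) :
    Xor' (Nonempty (G ≃* PresentedGroup (heisenbergRels p)))
      (Nonempty (G ≃* PresentedGroup (semidirectRels p))) := by
  have : Fact p.Prime := ⟨hp⟩
  rw [← isMulCommutative_iff] at hnab
  by_cases hexp : ∀ x : G, x ^ p = 1
  · exact Or.inl ⟨nonempty_mulEquiv_heisenberg hG hnab hexp,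
      fun ⟨e⟩ => hnab (isMulCommutative_of_mulEquiv_semidirect e hexp)⟩
  · obtain ⟨x, hx⟩ := not_forall.mp hexp
    exact Or.inr ⟨nonempty_mulEquiv_semidirect hG hnab hodd hx,
      fun ⟨e⟩ => hx (pow_eq_one_of_mulEquiv_heisenberg hG hnab hodd e x)⟩
end

section
/- Let p be an odd prime, e a primitive root mod p, L a number field containing ζ_p with a cyclic degree p-1 subextension structure given by an automorphism τ̄ of order p-1, and K the fixed field data as in the setup. Suppose q is a rational prime that does not split completely in K = ℚ(ζ_p) and I is a fractional ideal of K with N_{K/ℚ}(I) = ℤq^l, invariant under τ^g where g < p-1 is the decomposition number of q in K/ℚ. Then Φ̃(I) = Π_{j=0}^{p-2} τ^j(I)^{e^{p-(j+2)}} is the p-th power of a fractional ideal of K. -/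
open NumberField
open scoped nonZeroDivisors
open Finset

/-!
Since `τ^g I = I`, the factor `τ^j(I)` depends only on `j mod g`, so `Φ̃(I)` collects into
`∏_{r<g} τ^r(I)^{m_r}` with `m_r = ∑_{k<f} e^{p-(r+gk+2)}`, where `f = ord_p(q)` and `gf = p - 1`.
Modulo `p`, `e^g` is a primitive `f`-th root of unity with `f > 1`, so each `m_r` is, up to a
power of `e`, a vanishing geometric sum in `e^g`; hence `p ∣ m_r`.
-/

theorem Finset.prod_range_mul_eq_prod_prod {M : Type*} [CommMonoid M] (a : ℕ → M) (g f : ℕ) :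
    ∏ j ∈ range (g * f), a j = ∏ r ∈ range g, ∏ k ∈ range f, a (r + g * k) := by
  induction f with
  | zero => simp
  | succ f ih =>
    rw [Nat.mul_succ, prod_range_add, ih]
    simp only [prod_range_succ, prod_mul_distrib, add_comm]

theorem Function.Periodic.prod_range_mul_pow {M : Type*} [CommMonoid M] {a : ℕ → M} {g : ℕ}
    (ha : Function.Periodic a g) (n : ℕ → ℕ) (f : ℕ) :
    ∏ j ∈ range (g * f), a j ^ n j = ∏ r ∈ range g, a r ^ ∑ k ∈ range f, n (r + g * k) := by
  rw [prod_range_mul_eq_prod_prod]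
  refine prod_congr rfl fun r _ => ?_
  rw [← prod_pow_eq_pow_sum]
  refine prod_congr rfl fun k _ => ?_
  congr 1
  simpa [mul_comm] using ha.nat_mul k r

theorem Finset.exists_prod_pow_eq_pow_of_dvd {ι M : Type*} [CommMonoid M] {s : Finset ι}
    (a : ι → M) {m : ι → ℕ} {p : ℕ} (h : ∀ i ∈ s, p ∣ m i) :
    ∃ J, ∏ i ∈ s, a i ^ m i = J ^ p :=
  ⟨∏ i ∈ s, a i ^ (m i / p), by
    rw [← prod_pow]
    exact prod_congr rfl fun i hi => by rw [← pow_mul, Nat.div_mul_cancel (h i hi)]⟩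

theorem IsPrimitiveRoot.sum_pow_sub_eq_zero {R : Type*} [CommRing R] [IsDomain R] {x : R}
    {g f : ℕ} (hx : IsPrimitiveRoot x (g * f)) (hf : 1 < f) {r : ℕ} (hr : r < g) :
    ∑ k ∈ range f, x ^ (g * f - (r + g * k + 1)) = 0 := by
  have hroot : IsPrimitiveRoot (x ^ g) f := by
    simpa [show g ≠ 0 by omega] using hx.pow_of_dvd (show g ≠ 0 by omega) (dvd_mul_right g f)
  have hexp : ∀ k ∈ range f,
      x ^ (g * f - (r + g * k + 1)) = x ^ (g - 1 - r) * (x ^ g) ^ (f - 1 - k) := by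
    intro k hk
    obtain ⟨m, rfl⟩ : ∃ m, f = k + 1 + m := ⟨f - k - 1, by have := mem_range.1 hk; omega⟩
    rw [← pow_mul, ← pow_add, show k + 1 + m - 1 - k = m by omega]
    congr 1
    simp only [Nat.mul_add, Nat.mul_one]
    omega
  rw [sum_congr rfl hexp, ← mul_sum, sum_range_reflect (fun k => (x ^ g) ^ k) f,
    hroot.geom_sum_eq_zero hf, mul_zero]

theorem stmt_18_general (p : ℕ) (hp : p.Prime)
    (e : ℕ) (he : orderOf (e : ZMod p) = p - 1)
    (K : Type*) [Field K]
    (T : FractionalIdeal (RingOfIntegers K)⁰ K ≃*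
      FractionalIdeal (RingOfIntegers K)⁰ K)
    (q : ℕ) (hq : q.Prime) (hqp : q ≠ p)
    (g : ℕ) (hg : g = (p - 1) / orderOf (q : ZMod p)) (hglt : g < p - 1)
    (I : FractionalIdeal (RingOfIntegers K)⁰ K)
    (hinv : (T ^ g) I = I) :
    ∃ J : FractionalIdeal (RingOfIntegers K)⁰ K,
      (∏ j ∈ Finset.range (p - 1), ((T ^ j) I) ^ (e ^ (p - (j + 2)))) =
        J ^ p := by
  have : Fact p.Prime := ⟨hp⟩
  set f := orderOf (q : ZMod p)
  have hq0 : (q : ZMod p) ≠ 0 := fun h =>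
    hqp ((Nat.prime_dvd_prime_iff_eq hp hq).1 ((ZMod.natCast_eq_zero_iff q p).1 h)).symm
  have hgf : g * f = p - 1 := hg ▸ Nat.div_mul_cancel (ZMod.orderOf_dvd_card_sub_one hq0)
  have hf : 1 < f := by
    by_contra! h
    interval_cases f <;> omega
  have hroot : IsPrimitiveRoot (e : ZMod p) (g * f) := hgf ▸ he ▸ IsPrimitiveRoot.orderOf _
  have hper : Function.Periodic (fun j => (T ^ j) I) g := fun j => by
    simp only [pow_add, MulAut.mul_apply, hinv]
  simp_rw [show ∀ j, p - (j + 2) = p - 1 - (j + 1) from fun j => by omega, ← hgf,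
    hper.prod_range_mul_pow]
  refine Finset.exists_prod_pow_eq_pow_of_dvd _ fun r hr => (ZMod.natCast_eq_zero_iff _ p).1 ?_
  push_cast
  exact hroot.sum_pow_sub_eq_zero hf (Finset.mem_range.1 hr)

/-- Let `K = ℚ(ζ_p)` (`p` an odd prime), `e` a primitive root mod `p`, `τ` the
generator of `Gal(K/ℚ)` with `τ ζ = ζ^e`, and let `T` denote the induced action
of `τ` on the group of fractional ideals of `K`.  Let `q ≠ p` be a rational
prime that does not split completely in `K`, with decomposition number
`g = (p-1)/ord_p(q) < p - 1`, and let `I` be a fractional ideal of `K` with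
`N_{K/ℚ}(I) = ℤq^l` and `τ^g I = I`.  Then
`Φ̃(I) = ∏_{j=0}^{p-2} τ^j(I)^{e^{p-(j+2)}}` is the `p`-th power of a fractional
ideal of `K`. -/
theorem stmt_18 (p : ℕ) (hp : p.Prime) (hodd : Odd p)
    (e : ℕ) (he : orderOf (e : ZMod p) = p - 1)
    (K : Type*) [Field K] [NumberField K]
    (ζ : K) (hζ : IsPrimitiveRoot ζ p) (hKgen : Algebra.adjoin ℚ {ζ} = ⊤)
    (τ : K ≃ₐ[ℚ] K) (hτ : τ ζ = ζ ^ e)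
    (T : FractionalIdeal (RingOfIntegers K)⁰ K ≃*
      FractionalIdeal (RingOfIntegers K)⁰ K)
    (hT : ∀ I : FractionalIdeal (RingOfIntegers K)⁰ K,
      ((T I : Submodule (RingOfIntegers K) K) : Set K) =
        τ '' ((I : Submodule (RingOfIntegers K) K) : Set K))
    (q : ℕ) (hq : q.Prime) (hqp : q ≠ p)
    (hnsplit : (q : ZMod p) ≠ 1)
    (g : ℕ) (hg : g = (p - 1) / orderOf (q : ZMod p)) (hglt : g < p - 1)
    (I : FractionalIdeal (RingOfIntegers K)⁰ K) (hI0 : I ≠ 0)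
    (l : ℤ) (hnorm : FractionalIdeal.absNorm I = (q : ℚ) ^ l)
    (hinv : (T ^ g) I = I) :
    ∃ J : FractionalIdeal (RingOfIntegers K)⁰ K,
      (∏ j ∈ Finset.range (p - 1), ((T ^ j) I) ^ (e ^ (p - (j + 2)))) =
        J ^ p :=
  stmt_18_general p hp e he K T q hq hqp g hg hglt I hinv
end
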